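/- arXiv:1512.03858 — 3 statements merged into one kernel-verified Lean document; each statement's English description precedes it below -/
import Mathlib

section
/- If 0 < ℓ < W(1), then 0 < κ(ℓ) < √2 − 1; consequently 1 − 2κ(ℓ) > 0 and (1/2)(√(1 − 2κ(ℓ))/κ(ℓ) + 1) > 1, so that the tube radius formula cosh²(r₀) = (1/2)(√(1 − 2κ(ℓ))/κ(ℓ) + 1) defines a unique positive real number r₀. -/
/-- Inverse hyperbolic cosine: `arcosh y = log (y + √(y² - 1))` for `y ≥ 1`. -/
noncomputable def arcosh (y : ℝ) : ℝ := Real.log (y + Real.sqrt (y ^ 2 - 1))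

/-- The function `W` from the paper. -/
noncomputable def W (x : ℝ) : ℝ :=
  (Real.sqrt 3 / (4 * Real.pi)) *
    (arcosh (1 + 1 / (1 + Real.sqrt (1 + (8 * x ^ 2 - 8 * x + 1) ^ 2)))) ^ 2

/-- The function `κ(ℓ) = cosh(√(4πℓ/√3)) - 1`. -/
noncomputable def κ (ℓ : ℝ) : ℝ :=
  Real.cosh (Real.sqrt (4 * Real.pi * ℓ / Real.sqrt 3)) - 1

/-- The tube radius `r₀(ℓ)`, the positive real with
`cosh²(r₀(ℓ)) = (1/2)(√(1 - 2κ(ℓ))/κ(ℓ) + 1)`. -/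
noncomputable def r₀ (ℓ : ℝ) : ℝ :=
  arcosh (Real.sqrt ((1 / 2) * (Real.sqrt (1 - 2 * κ ℓ) / κ ℓ + 1)))

/-!
Since `W 1 = (√3 / 4π) arcosh² √2`, the hypothesis `ℓ < W 1` says exactly that
`t := √(4πℓ/√3) < arcosh √2`, so `κ ℓ = cosh t - 1 < √2 - 1`. For `0 < k`, the bound
`k < √2 - 1` is equivalent to `(k + 1)² < 2`, i.e. to `k² < 1 - 2k`, i.e. to `√(1 - 2k) / k > 1`.
Finally `cosh` is a bijection from `(0, ∞)` onto `(1, ∞)`.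
-/

open Real

theorem arcosh_eq_real_arcosh : _root_.arcosh = Real.arcosh := rfl

theorem W_one : W 1 = √3 / (4 * π) * Real.arcosh √2 ^ 2 := by
  have h : (1 : ℝ) + 1 / (1 + √(1 + (8 * 1 ^ 2 - 8 * 1 + 1) ^ 2)) = √2 := by
    have h2 : √2 ^ 2 = 2 := sq_sqrt zero_le_two
    norm_num
    field_simp
    nlinarith
  rw [W, h, arcosh_eq_real_arcosh]

theorem sqrt_lt_arcosh_sqrt_two_of_lt_W_one {ℓ : ℝ} (h : ℓ < W 1) :
    √(4 * π * ℓ / √3) < Real.arcosh √2 := by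
  have hA : 0 < Real.arcosh √2 := arcosh_pos (one_lt_sqrt_two)
  rw [sqrt_lt' hA, div_lt_iff₀ (by positivity)]
  rw [W_one, div_mul_eq_mul_div, lt_div_iff₀ (by positivity)] at h
  linarith

theorem κ_pos {ℓ : ℝ} (h : 0 < ℓ) : 0 < κ ℓ := by
  have ht : √(4 * π * ℓ / √3) ≠ 0 := (sqrt_pos.2 (by positivity)).ne'
  simpa [κ] using one_lt_cosh.2 ht

theorem κ_lt_sqrt_two_sub_one {ℓ : ℝ} (h : ℓ < W 1) : κ ℓ < √2 - 1 := by
  have hlt := sqrt_lt_arcosh_sqrt_two_of_lt_W_one h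
  have hcosh : cosh √(4 * π * ℓ / √3) < cosh (Real.arcosh √2) := by
    rw [cosh_lt_cosh, abs_of_nonneg (sqrt_nonneg _),
      abs_of_pos (arcosh_pos one_lt_sqrt_two)]
    exact hlt
  rw [cosh_arcosh one_lt_sqrt_two.le] at hcosh
  rw [κ]
  linarith

theorem sqrt_two_sub_one_lt_half : √2 - 1 < 1 / 2 := by
  nlinarith [sq_sqrt (zero_le_two : (0 : ℝ) ≤ 2), sqrt_nonneg 2]

theorem one_lt_sqrt_one_sub_two_mul_div {k : ℝ} (hk0 : 0 < k) (hk : k < √2 - 1) :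
    1 < √(1 - 2 * k) / k := by
  have hsq : (k + 1) ^ 2 < 2 := by
    have h2 : √2 ^ 2 = 2 := sq_sqrt zero_le_two
    nlinarith
  rw [one_lt_div hk0, lt_sqrt hk0.le]
  linarith

theorem existsUnique_pos_cosh_sq_eq {c : ℝ} (hc : 1 < c) :
    ∃! r : ℝ, 0 < r ∧ cosh r ^ 2 = c := by
  have hsc : 1 < √c := by simpa using sqrt_lt_sqrt zero_le_one hc
  refine ⟨Real.arcosh √c, ⟨arcosh_pos hsc, ?_⟩, ?_⟩
  · rw [cosh_arcosh hsc.le, sq_sqrt (by linarith)]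
  · rintro r ⟨hr, hcosh⟩
    rw [← hcosh, sqrt_sq (cosh_pos r).le, arcosh_cosh hr.le]

theorem tube_radius_well_defined (ℓ : ℝ) (h0 : 0 < ℓ) (h1 : ℓ < W 1) :
    (0 < κ ℓ ∧ κ ℓ < Real.sqrt 2 - 1) ∧
    1 - 2 * κ ℓ > 0 ∧
    (1 / 2) * (Real.sqrt (1 - 2 * κ ℓ) / κ ℓ + 1) > 1 ∧
    ∃! r : ℝ, 0 < r ∧
      (Real.cosh r) ^ 2 = (1 / 2) * (Real.sqrt (1 - 2 * κ ℓ) / κ ℓ + 1) := by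
  have hpos := κ_pos h0
  have hlt := κ_lt_sqrt_two_sub_one h1
  have hc : 1 < (1 / 2) * (√(1 - 2 * κ ℓ) / κ ℓ + 1) := by
    linarith [one_lt_sqrt_one_sub_two_mul_div hpos hlt]
  exact ⟨⟨hpos, hlt⟩, by linarith [sqrt_two_sub_one_lt_half], hc,
    existsUnique_pos_cosh_sq_eq hc⟩
end

section
/- If 0 < ℓ < W(3/2), then ℓ² · sinh²(r₀(ℓ)) < √3 ℓ/(4π). -/
/-! With `t² = 4πℓ/√3` the claim reads `t² sinh² r < 1`. The defining equation of `r` gives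
`sinh² r = (√(1 - 2κ) - κ) / (2κ) ≤ 1 / (2κ)`, and `κ = cosh t - 1 > t² / 2`. -/

open Real

lemma Real.one_add_sq_div_two_lt_cosh {t : ℝ} (ht : t ≠ 0) : 1 + t ^ 2 / 2 < cosh t := by
  have hpos : 0 < |t| / 2 := by positivity
  have hsinh : |t| / 2 < sinh (|t| / 2) := self_lt_sinh_iff.2 hpos
  have hcosh : cosh (2 * (|t| / 2)) = 1 + 2 * sinh (|t| / 2) ^ 2 := by
    rw [cosh_two_mul, cosh_sq]
    ring
  rw [mul_div_cancel₀ _ two_ne_zero] at hcosh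
  rw [← cosh_abs, hcosh, ← sq_abs t]
  nlinarith

lemma sinh_sq_eq_of_cosh_sq_eq {S κ r : ℝ} (hκ : κ ≠ 0)
    (hcosh : cosh r ^ 2 = 1 / 2 * (S / κ + 1)) : sinh r ^ 2 = (S - κ) / (2 * κ) := by
  rw [sinh_sq, hcosh]
  field_simp
  ring

lemma sq_mul_sinh_sq_lt_one {t κ r : ℝ} (hκ : t ^ 2 / 2 < κ)
    (hcosh : cosh r ^ 2 = 1 / 2 * (√(1 - 2 * κ) / κ + 1)) : t ^ 2 * sinh r ^ 2 < 1 := by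
  have hκpos : 0 < κ := by nlinarith [sq_nonneg t]
  have hS : √(1 - 2 * κ) ≤ 1 := sqrt_le_one.2 (by linarith)
  rw [sinh_sq_eq_of_cosh_sq_eq hκpos.ne' hcosh, mul_div_assoc', div_lt_one (by positivity)]
  nlinarith [mul_le_mul_of_nonneg_left hS (sq_nonneg t), mul_nonneg (sq_nonneg t) hκpos.le]

theorem ell_sq_sinh_sq_lt_general (ℓ : ℝ) (h0 : 0 < ℓ)
    (r : ℝ)
    (hcosh : (Real.cosh r) ^ 2 = (1 / 2) * (Real.sqrt (1 - 2 * κ ℓ) / κ ℓ + 1)) :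
    ℓ ^ 2 * (Real.sinh r) ^ 2 < Real.sqrt 3 * ℓ / (4 * Real.pi) := by
  set t := √(4 * π * ℓ / √3)
  have ht : t ^ 2 = 4 * π * ℓ / √3 := sq_sqrt (by positivity)
  have hκ : t ^ 2 / 2 < κ ℓ :=
    lt_sub_iff_add_lt'.2 (one_add_sq_div_two_lt_cosh (sqrt_pos.2 (by positivity)).ne')
  have hscale : ℓ ^ 2 * sinh r ^ 2 = √3 * ℓ / (4 * π) * (t ^ 2 * sinh r ^ 2) := by
    rw [ht]
    field_simp
  rw [hscale]
  exact mul_lt_of_lt_one_right (by positivity) (sq_mul_sinh_sq_lt_one hκ hcosh)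

theorem ell_sq_sinh_sq_lt (ℓ : ℝ) (h0 : 0 < ℓ) (h1 : ℓ < W (3 / 2))
    (r : ℝ) (hr : 0 < r)
    (hcosh : (Real.cosh r) ^ 2 = (1 / 2) * (Real.sqrt (1 - 2 * κ ℓ) / κ ℓ + 1)) :
    ℓ ^ 2 * (Real.sinh r) ^ 2 < Real.sqrt 3 * ℓ / (4 * Real.pi) :=
  ell_sq_sinh_sq_lt_general ℓ h0 r hcosh
end

section
/- (Inequality (5.6)) There exists ε > 0 such that for all ℓ with 0 < ℓ < ε, one has √ℓ · (cosh(r₀(ℓ)) − 1) > 1/(2b), where b = √(4π/√3). -/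
theorem Real.cosh_sub_one_le_sq {t : ℝ} (ht : |t| ≤ 1) : Real.cosh t - 1 ≤ t ^ 2 := by
  have ht2 : t ^ 2 ≤ 1 := sq_le_one_iff_abs_le_one t |>.2 ht
  have hu : t ^ 2 / 2 < 1 := by linarith
  have hexp : Real.exp (t ^ 2 / 2) ≤ 1 + t ^ 2 := by
    refine (Real.exp_bound_div_one_sub_of_interval (by positivity) hu).trans ?_
    rw [div_le_iff₀ (by linarith)]
    nlinarith [sq_nonneg t]
  linarith [Real.cosh_le_exp_half_sq t]

lemma one_sub_le_sqrt_one_sub_two_mul_add {k : ℝ} (hk0 : 0 ≤ k) :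
    1 - k ≤ Real.sqrt (1 - 2 * k) + k := by
  have : 1 - 2 * k ≤ Real.sqrt (1 - 2 * k) := Real.le_sqrt_self_iff.2 (by linarith)
  linarith

lemma cosh_arcosh {y : ℝ} (hy : 1 ≤ y) : Real.cosh (arcosh y) = y :=
  Real.cosh_arcosh hy

lemma one_sub_κ_div_le_cosh_r₀_sq {ℓ : ℝ} (hκ0 : 0 < κ ℓ) (hκ : κ ℓ ≤ 1 / 3) :
    (1 - κ ℓ) / (2 * κ ℓ) ≤ Real.cosh (r₀ ℓ) ^ 2 := by
  rw [r₀]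
  set k := κ ℓ
  have hlower : (1 - k) / (2 * k) ≤ (1 / 2) * (Real.sqrt (1 - 2 * k) / k + 1) := by
    rw [div_le_iff₀ (by positivity)]
    have : (1 / 2) * (Real.sqrt (1 - 2 * k) / k + 1) * (2 * k) = Real.sqrt (1 - 2 * k) + k := by
      field_simp
    rw [this]
    exact one_sub_le_sqrt_one_sub_two_mul_add hκ0.le
  have hone : 1 ≤ (1 - k) / (2 * k) := by rw [le_div_iff₀ (by positivity)]; linarith
  rw [cosh_arcosh (Real.one_le_sqrt.2 (hone.trans hlower)),
    Real.sq_sqrt (by linarith)]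
  exact hlower

lemma half_lt_mul_sub_one {t k c : ℝ} (ht0 : 0 ≤ t) (ht : t ≤ 1 / 10) (hk0 : 0 < k)
    (hkt : k ≤ t ^ 2) (hc : 0 ≤ c) (h : (1 - k) / (2 * k) ≤ c ^ 2) : 1 / 2 < t * (c - 1) := by
  have hkc : 1 - k ≤ 2 * k * c ^ 2 := by rwa [div_le_iff₀ (by positivity), mul_comm] at h
  have htc : (7 / 10) ^ 2 < (t * c) ^ 2 := by
    nlinarith [mul_le_mul_of_nonneg_right hkt (sq_nonneg c)]
  have : 7 / 10 < t * c := lt_of_pow_lt_pow_left₀ 2 (by positivity) htc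
  linarith

theorem sqrt_ell_cosh_lower_bound :
    ∃ ε > (0 : ℝ), ∀ ℓ : ℝ, 0 < ℓ → ℓ < ε →
      Real.sqrt ℓ * (Real.cosh (r₀ ℓ) - 1) >
        1 / (2 * Real.sqrt (4 * Real.pi / Real.sqrt 3)) := by
  set B := 4 * Real.pi / Real.sqrt 3
  have hB : 0 < B := by positivity
  refine ⟨1 / (100 * B), by positivity, fun ℓ hℓ hℓε => ?_⟩
  have hBℓ : B * ℓ < 1 / 100 := by
    rw [lt_div_iff₀ (by positivity)] at hℓε; linarith
  set t := Real.sqrt (B * ℓ)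
  have ht0 : 0 < t := Real.sqrt_pos.2 (by positivity)
  have ht : t ≤ 1 / 10 := Real.sqrt_le_iff.2 ⟨by norm_num, by linarith⟩
  have hκ : κ ℓ = Real.cosh t - 1 := by rw [κ, mul_div_right_comm]
  have hκ0 : 0 < κ ℓ := by rw [hκ]; linarith [Real.one_lt_cosh.2 ht0.ne']
  have hκt : κ ℓ ≤ t ^ 2 := hκ ▸ Real.cosh_sub_one_le_sq (by rw [abs_of_pos ht0]; linarith)
  have key : 1 / 2 < t * (Real.cosh (r₀ ℓ) - 1) :=
    half_lt_mul_sub_one ht0.le ht hκ0 hκt (Real.cosh_pos _).le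
      (one_sub_κ_div_le_cosh_r₀_sq hκ0 (by nlinarith))
  rw [show t = Real.sqrt B * Real.sqrt ℓ from Real.sqrt_mul hB.le ℓ] at key
  rw [gt_iff_lt, div_lt_iff₀ (by positivity)]
  linarith
end
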